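/- arXiv:2103.15569 — 6 statements merged into one kernel-verified Lean document; each statement's English description precedes it below -/
import Mathlib

section
/- Let (x_n)_{n≥0} be a sequence of real numbers with 0 ≤ x_n ≤ 1 for all n, and let 0 < α ≤ 1 satisfy x_{k+1} ≤ α x_k (1 − x_k) for all k ≥ 0. Then for all n ≥ 0, x_n ≤ x_0 / (α^{−n} + n x_0). (Lemma A.6 of Campbell–Broderick, used to establish the exponential Frank–Wolfe convergence rate.) -/
/-- Lemma A.6 of Campbell–Broderick: if `0 ≤ x_n ≤ 1`, `0 < α ≤ 1`, and
`x_{k+1} ≤ α x_k (1 − x_k)` for all `k`, then `x_n ≤ x_0 / (α^{−n} + n x_0)`. -/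
theorem seq_recursion_bound
    (x : ℕ → ℝ) (hx0 : ∀ n, 0 ≤ x n) (hx1 : ∀ n, x n ≤ 1)
    (α : ℝ) (hα0 : 0 < α) (hα1 : α ≤ 1)
    (hrec : ∀ k, x (k + 1) ≤ α * x k * (1 - x k)) :
    ∀ n : ℕ, x n ≤ x 0 / (α ^ (-(n : ℤ)) + (n : ℝ) * x 0) := by
  have hpow : ∀ m : ℕ, α ^ (-(m : ℤ)) = (α ^ m)⁻¹ := by
    intro m; rw [zpow_neg, zpow_natCast]
  intro n
  induction n with
  | zero => simp
  | succ n ih =>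
    rw [hpow] at ih ⊢
    have hαn : 0 < α ^ n := pow_pos hα0 n
    have hαn1 : 0 < α ^ (n + 1) := pow_pos hα0 (n + 1)
    have hx00 := hx0 0
    have hd0 : 0 < (α ^ n)⁻¹ + (n : ℝ) * x 0 := by positivity
    have hD : 0 < (α ^ (n + 1))⁻¹ + ((n : ℝ) + 1) * x 0 := by positivity
    have ih' : x n * ((α ^ n)⁻¹ + (n : ℝ) * x 0) ≤ x 0 := (le_div_iff₀ hd0).mp ih
    have hu : α * (α ^ (n + 1))⁻¹ = (α ^ n)⁻¹ := by
      field_simp [pow_succ]; ring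
    have hmul : x (n + 1) * ((α ^ (n + 1))⁻¹ + ((n : ℝ) + 1) * x 0) ≤
        (α * x n * (1 - x n)) * ((α ^ (n + 1))⁻¹ + ((n : ℝ) + 1) * x 0) :=
      mul_le_mul_of_nonneg_right (hrec n) hD.le
    have hxn0 := hx0 n
    have hxn1 := hx1 n
    have key : (α * x n * (1 - x n)) * ((α ^ (n + 1))⁻¹ + ((n : ℝ) + 1) * x 0) ≤ x 0 := by
      have h1 : (α * x n * (1 - x n)) * ((α ^ (n + 1))⁻¹ + ((n : ℝ) + 1) * x 0)
          = x n * (1 - x n) * (α ^ n)⁻¹ + α * ((n : ℝ) + 1) * (x n * (1 - x n)) * x 0 := by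
        have : α * x n * (1 - x n) * (α ^ (n + 1))⁻¹
            = x n * (1 - x n) * (α * (α ^ (n + 1))⁻¹) := by ring
        rw [mul_add, this, hu]; ring
      rw [h1]
      nlinarith [mul_le_mul_of_nonneg_left ih' (by linarith : (0:ℝ) ≤ 1 - x n),
        mul_nonneg (mul_nonneg hxn0 (by linarith : (0:ℝ) ≤ 1 - x n))
          (mul_nonneg (by positivity : (0:ℝ) ≤ (n : ℝ) + 1) (mul_nonneg (by linarith : (0:ℝ) ≤ 1 - α) hx00)),
        mul_nonneg (mul_nonneg hxn0 hxn0) hx00]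
    push_cast
    rw [le_div_iff₀ hD]
    linarith
end

section
/- Let H be a real inner product space, l_1, …, l_N ∈ H nonzero, and p ∈ ℝ^N a probability vector with σ := Σ_n p_n‖l_n‖ > 0. Let L := Σ_n p_n l_n and let f ∈ {1, …, N} attain the maximum of n ↦ ⟨l_n/‖l_n‖, L⟩. Then ‖(σ/‖l_f‖) l_f − L‖² ≤ σ² − ‖L‖²; i.e., the Frank–Wolfe initialization satisfies J̃(w̃_0, p̂) ≤ σ² η² with η² := 1 − ‖L‖²/σ². -/
open scoped RealInnerProductSpace

/-- The Frank–Wolfe initialization satisfies `J̃(w̃₀, p̂) ≤ σ² η²`, i.e.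
`‖(σ/‖l_f‖) l_f − L‖² ≤ σ² − ‖L‖²` where `f` maximizes `n ↦ ⟨l_n/‖l_n‖, L⟩`. -/
theorem frankWolfe_initialization_bound
    {H : Type*} [NormedAddCommGroup H] [InnerProductSpace ℝ H]
    (N : ℕ) (l : Fin N → H) (hl : ∀ n, l n ≠ 0)
    (p : Fin N → ℝ) (hp0 : ∀ n, 0 ≤ p n) (hp1 : ∑ n, p n = 1)
    (σ : ℝ) (hσ : σ = ∑ n, p n * ‖l n‖) (hσpos : 0 < σ)
    (L : H) (hL : L = ∑ n, p n • l n)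
    (f : Fin N)
    (hf : ∀ n, ⟪(‖l n‖)⁻¹ • l n, L⟫ ≤ ⟪(‖l f‖)⁻¹ • l f, L⟫) :
    ‖(σ / ‖l f‖) • l f - L‖ ^ 2 ≤ σ ^ 2 - ‖L‖ ^ 2 := by
  set u : Fin N → H := fun n => (‖l n‖)⁻¹ • l n with hu
  have hun : ∀ n, ‖u n‖ = 1 := fun n => by
    simp [hu, norm_smul, abs_of_nonneg (norm_nonneg (l n)),
      inv_mul_cancel₀ (norm_ne_zero_iff.mpr (hl n))]
  -- key inequality: ‖L‖² ≤ σ * ⟪u f, L⟫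
  have key : ‖L‖ ^ 2 ≤ σ * ⟪u f, L⟫ := by
    have hLL : ‖L‖ ^ 2 = ∑ n, p n * ‖l n‖ * ⟪u n, L⟫ := by
      rw [← real_inner_self_eq_norm_sq]
      nth_rewrite 1 [hL]
      rw [sum_inner]
      refine Finset.sum_congr rfl fun n _ => ?_
      rw [real_inner_smul_left]
      have : ⟪u n, L⟫ = (‖l n‖)⁻¹ * ⟪l n, L⟫ := by
        simp [hu, real_inner_smul_left]
      rw [this]
      field_simp [norm_ne_zero_iff.mpr (hl n)]
    rw [hLL, hσ, Finset.sum_mul]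
    refine Finset.sum_le_sum fun n _ => ?_
    have hn : 0 ≤ p n * ‖l n‖ := mul_nonneg (hp0 n) (norm_nonneg _)
    exact mul_le_mul_of_nonneg_left (hf n) hn
  have hlf : ‖l f‖ ≠ 0 := norm_ne_zero_iff.mpr (hl f)
  have hsmul : (σ / ‖l f‖) • l f = σ • u f := by
    rw [hu, smul_smul, div_eq_mul_inv]
  rw [hsmul, norm_sub_sq_real, real_inner_smul_left, norm_smul,
    Real.norm_eq_abs, abs_of_pos hσpos, mul_pow, hun f, one_pow, mul_one]
  nlinarith [key]
end

section
/- Let H be a real inner product space, C ⊆ H, and u ∈ C, T ∈ H with T ≠ u. Suppose r > 0 is such that the point u + (‖T − u‖ + r)(T − u)/‖T − u‖ lies in C, and suppose v ∈ C maximizes c ↦ ⟨T − u, c − u⟩ over c ∈ C. Then ⟨v − u, T − u⟩ ≥ ‖T − u‖ (‖T − u‖ + r); consequently, if v ≠ u, ⟨(v − u)/‖v − u‖, (T − u)/‖T − u‖⟩ ≥ (‖T − u‖ + r)/‖v − u‖. (The key geometric inequality for the Frank–Wolfe vertex when the target lies at distance r inside the feasible region.) -/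
open scoped RealInnerProductSpace

/-- Key geometric inequality for the Frank–Wolfe vertex when the target `T` lies at
distance `r` inside the feasible region `C`. -/
theorem frankWolfe_vertex_inner_bound
    {H : Type*} [NormedAddCommGroup H] [InnerProductSpace ℝ H]
    (C : Set H) (u : H) (hu : u ∈ C) (T : H) (hT : T ≠ u)
    (r : ℝ) (hr : 0 < r)
    (hin : u + (‖T - u‖ + r) • ((‖T - u‖)⁻¹ • (T - u)) ∈ C)
    (v : H) (hv : v ∈ C)
    (hmax : ∀ c ∈ C, ⟪T - u, c - u⟫ ≤ ⟪T - u, v - u⟫) :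
    ‖T - u‖ * (‖T - u‖ + r) ≤ ⟪v - u, T - u⟫ ∧
    (v ≠ u →
      (‖T - u‖ + r) / ‖v - u‖ ≤
        ⟪(‖v - u‖)⁻¹ • (v - u), (‖T - u‖)⁻¹ • (T - u)⟫) := by
  have hTu : T - u ≠ 0 := sub_ne_zero.mpr hT
  have hn : ‖T - u‖ ≠ 0 := norm_ne_zero_iff.mpr hTu
  have key := hmax _ hin
  have hcalc : ⟪T - u, u + (‖T - u‖ + r) • ((‖T - u‖)⁻¹ • (T - u)) - u⟫
      = ‖T - u‖ * (‖T - u‖ + r) := by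
    rw [add_sub_cancel_left, inner_smul_right, inner_smul_right,
      real_inner_self_eq_norm_mul_norm]
    field_simp
  have h1 : ‖T - u‖ * (‖T - u‖ + r) ≤ ⟪v - u, T - u⟫ := by
    rw [real_inner_comm]
    calc ‖T - u‖ * (‖T - u‖ + r) = _ := hcalc.symm
    _ ≤ _ := key
  refine ⟨h1, fun hvu => ?_⟩
  have hvn : (0:ℝ) < ‖v - u‖ := norm_pos_iff.mpr (sub_ne_zero.mpr hvu)
  rw [inner_smul_left, inner_smul_right, div_le_iff₀ hvn]
  have : (‖T - u‖ + r) = ‖T - u‖⁻¹ * (‖T - u‖ * (‖T - u‖ + r)) := by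
    field_simp
  rw [this]
  have hinv : (0:ℝ) ≤ ‖T - u‖⁻¹ := by positivity
  calc ‖T - u‖⁻¹ * (‖T - u‖ * (‖T - u‖ + r))
      ≤ ‖T - u‖⁻¹ * ⟪v - u, T - u⟫ := by
        exact mul_le_mul_of_nonneg_left h1 hinv
    _ = ‖v - u‖⁻¹ * (‖T - u‖⁻¹ * ⟪v - u, T - u⟫) * ‖v - u‖ := by
        
        field_simp
end

section
/- Let H be a real inner product space, a, b ∈ H with b ≠ 0, and let r ≥ 0, M > 0 with ‖b‖ ≤ M and r < M; set β² := 1 − r²/M². If ⟨a, b⟩ ≥ ‖a‖(‖a‖ + r), then ‖a‖² − ⟨a, b⟩²/‖b‖² ≤ β² ‖a‖² (1 − ‖a‖²/(M² β²)). (The one-step Frank–Wolfe contraction: J̃(w̃_{t+1}, p̂) ≤ β² J̃(w̃_t, p̂)(1 − J̃(w̃_t, p̂)/(σ² η̄² β²)).) -/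
open scoped RealInnerProductSpace

/-- One-step Frank–Wolfe contraction:
`J̃(w̃_{t+1}, p̂) ≤ β² J̃(w̃_t, p̂) (1 − J̃(w̃_t, p̂)/(σ² η̄² β²))`. -/
theorem frankWolfe_one_step_contraction
    {H : Type*} [NormedAddCommGroup H] [InnerProductSpace ℝ H]
    (a b : H) (hb : b ≠ 0)
    (r M : ℝ) (hr : 0 ≤ r) (hM : 0 < M) (hbM : ‖b‖ ≤ M) (hrM : r < M)
    (β : ℝ) (hβ : β ^ 2 = 1 - r ^ 2 / M ^ 2)
    (halign : ‖a‖ * (‖a‖ + r) ≤ ⟪a, b⟫) :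
    ‖a‖ ^ 2 - ⟪a, b⟫ ^ 2 / ‖b‖ ^ 2 ≤
      β ^ 2 * ‖a‖ ^ 2 * (1 - ‖a‖ ^ 2 / (M ^ 2 * β ^ 2)) := by
  set t := ‖a‖ with ht
  set i := (⟪a, b⟫ : ℝ) with hi
  have ht0 : 0 ≤ t := norm_nonneg a
  have hbp : 0 < ‖b‖ := norm_pos_iff.mpr hb
  have hi0 : 0 ≤ i := le_trans (by positivity) halign
  have hβpos : 0 < β ^ 2 := by
    rw [hβ]
    have : r ^ 2 < M ^ 2 := by nlinarith
    have hM2 : 0 < M ^ 2 := by positivity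
    rw [sub_pos, div_lt_one hM2]
    exact this
  -- Step 1: i^2 / ‖b‖^2 ≥ i^2 / M^2
  have h1 : i ^ 2 / M ^ 2 ≤ i ^ 2 / ‖b‖ ^ 2 := by
    apply div_le_div_of_nonneg_left (by positivity) (by positivity)
    nlinarith
  -- Step 2: i^2 ≥ t^2 (t+r)^2 ≥ t^4 + r^2 t^2
  have h2 : t ^ 4 + r ^ 2 * t ^ 2 ≤ i ^ 2 := by
    have := mul_self_le_mul_self (by positivity : (0:ℝ) ≤ t * (t + r)) halign
    nlinarith [mul_nonneg (mul_nonneg ht0 ht0) (mul_nonneg ht0 hr)]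
  have key : (t ^ 4 + r ^ 2 * t ^ 2) / M ^ 2 ≤ i ^ 2 / ‖b‖ ^ 2 :=
    le_trans (by apply div_le_div_of_nonneg_right h2 (by positivity)) h1
  have hrhs : β ^ 2 * t ^ 2 * (1 - t ^ 2 / (M ^ 2 * β ^ 2))
      = t ^ 2 - (t ^ 4 + r ^ 2 * t ^ 2) / M ^ 2 := by
    rw [hβ]
    have hne : M ^ 2 - r ^ 2 ≠ 0 := by nlinarith
    have hMne : (M:ℝ) ^ 2 ≠ 0 := by positivity
    field_simp
    ring
  rw [hrhs]
  linarith
end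

section
/- Let (Θ, 𝓕, ν) be a probability space, l_1, …, l_N ∈ L²(ν), p ∈ ℝ^N a probability vector, and w̃ ∈ ℝ^N. Let u_1, …, u_N ∈ ℝ^J be vectors such that max_{m,n} |∫ l_m l_n dν − u_mᵀ u_n| ≤ ε for some ε ≥ 0. Then ∫_Θ (Σ_n (w̃_n − p_n) l_n(θ))² dν(θ) ≤ ‖Σ_n (w̃_n − p_n) u_n‖² + ‖w̃ − p‖₁² ε, where ‖·‖ is the Euclidean norm on ℝ^J and ‖·‖₁ the ℓ1 norm on ℝ^N. (Inequality (th2b): ‖L − L(w̃)‖²_{ν,2} ≤ ‖u − u(w̃)‖² + ‖w̃ − p‖₁² · max-error.) -/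
open MeasureTheory Finset
open scoped RealInnerProductSpace

/-! Both sides are quadratic forms in `v = w̃ - p`: the left one with the Gram matrix
`∫ l_m l_n dν` of the `l_n`, the right one with the Gram matrix `⟪u_m, u_n⟫` of the `u_n`.
The two matrices differ entrywise by at most `ε`, and a quadratic form in `v` whose
coefficients are bounded by `ε` is bounded by `(∑ |v_n|)² ε`. -/

section QuadraticForms

variable {ι : Type*} [Fintype ι]

lemma sum_sum_mul_mul_le_sq_sum_abs_mul (v : ι → ℝ) (C : ι → ι → ℝ) {ε : ℝ}
    (hC : ∀ m n, |C m n| ≤ ε) :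
    ∑ m, ∑ n, v m * v n * C m n ≤ (∑ n, |v n|) ^ 2 * ε := by
  rw [sq, sum_mul_sum, sum_mul]
  refine sum_le_sum fun m _ => ?_
  rw [sum_mul]
  refine sum_le_sum fun n _ => ?_
  calc v m * v n * C m n ≤ |v m * v n * C m n| := le_abs_self _
    _ = |v m| * |v n| * |C m n| := by rw [abs_mul, abs_mul]
    _ ≤ |v m| * |v n| * ε := by gcongr; exact hC m n

lemma integral_sq_sum_mul_eq_sum_sum {Θ : Type*} [MeasurableSpace Θ] {ν : Measure Θ}
    {l : ι → Θ → ℝ} (hl : ∀ n, MemLp (l n) 2 ν) (v : ι → ℝ) :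
    ∫ θ, (∑ n, v n * l n θ) ^ 2 ∂ν = ∑ m, ∑ n, v m * v n * ∫ θ, l m θ * l n θ ∂ν := by
  have hprod : ∀ m n, Integrable (fun θ => v m * v n * (l m θ * l n θ)) ν := fun m n =>
    ((hl m).integrable_mul (hl n)).const_mul _
  have hsq : ∀ θ, (∑ n, v n * l n θ) ^ 2 = ∑ m, ∑ n, v m * v n * (l m θ * l n θ) := by
    intro θ
    rw [sq, sum_mul_sum]
    congr! 2
    ring
  simp_rw [hsq]
  rw [integral_finsetSum _ fun m _ => integrable_finsetSum _ fun n _ => hprod m n]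
  refine sum_congr rfl fun m _ => ?_
  rw [integral_finsetSum _ fun n _ => hprod m n]
  simp_rw [integral_const_mul]

lemma norm_sum_smul_sq_eq_sum_sum {E : Type*} [NormedAddCommGroup E] [InnerProductSpace ℝ E]
    (v : ι → ℝ) (u : ι → E) :
    ‖∑ n, v n • u n‖ ^ 2 = ∑ m, ∑ n, v m * v n * ⟪u m, u n⟫ := by
  simp_rw [← real_inner_self_eq_norm_sq, sum_inner, inner_sum, real_inner_smul_left,
    real_inner_smul_right, mul_assoc]

end QuadraticForms

theorem coreset_error_random_projection_bound_general
    {Θ : Type*} [MeasurableSpace Θ] (ν : Measure Θ)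
    (N J : ℕ) (l : Fin N → Θ → ℝ) (hl : ∀ n, MemLp (l n) 2 ν)
    (p : Fin N → ℝ)
    (w : Fin N → ℝ)
    (u : Fin N → EuclideanSpace ℝ (Fin J))
    (ε : ℝ)
    (hu : ∀ m n, |(∫ θ, l m θ * l n θ ∂ν) - ⟪u m, u n⟫| ≤ ε) :
    ∫ θ, (∑ n, (w n - p n) * l n θ) ^ 2 ∂ν ≤
      ‖∑ n, (w n - p n) • u n‖ ^ 2 + (∑ n, |w n - p n|) ^ 2 * ε := by
  rw [integral_sq_sum_mul_eq_sum_sum hl, norm_sum_smul_sq_eq_sum_sum, ← sub_le_iff_le_add']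
  simp_rw [← sum_sub_distrib, ← mul_sub]
  exact sum_sum_mul_mul_le_sq_sum_abs_mul _ _ hu

/-- Inequality (th2b): `‖L − L(w̃)‖²_{ν,2} ≤ ‖u − u(w̃)‖² + ‖w̃ − p‖₁² ε` whenever the
projected inner products are uniformly `ε`-accurate. -/
theorem coreset_error_random_projection_bound
    {Θ : Type*} [MeasurableSpace Θ] (ν : Measure Θ) [IsProbabilityMeasure ν]
    (N J : ℕ) (l : Fin N → Θ → ℝ) (hl : ∀ n, MemLp (l n) 2 ν)
    (p : Fin N → ℝ) (hp0 : ∀ n, 0 ≤ p n) (hp1 : ∑ n, p n = 1)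
    (w : Fin N → ℝ)
    (u : Fin N → EuclideanSpace ℝ (Fin J))
    (ε : ℝ) (hε : 0 ≤ ε)
    (hu : ∀ m n, |(∫ θ, l m θ * l n θ ∂ν) - ⟪u m, u n⟫| ≤ ε) :
    ∫ θ, (∑ n, (w n - p n) * l n θ) ^ 2 ∂ν ≤
      ‖∑ n, (w n - p n) • u n‖ ^ 2 + (∑ n, |w n - p n|) ^ 2 * ε :=
  coreset_error_random_projection_bound_general ν N J l hl p w u ε hu
end

section
/- Let (Θ, 𝓕, ν) be a probability space, l_1, …, l_N ∈ L²(ν), p ∈ ℝ^N a probability vector, w̃ ∈ ℝ^N, and u_1, …, u_N ∈ ℝ^J vectors such that max_{m,n} |∫ l_m l_n dν − u_mᵀ u_n| ≤ ε for some ε ≥ 0. Then |∫_Θ Σ_n p_n l_n(θ) dν(θ)| ≤ (‖Σ_n w̃_n u_n‖² + ‖w̃‖₁² ε)^{1/2} + (‖Σ_n (w̃_n − p_n) u_n‖² + ‖w̃ − p‖₁² ε)^{1/2}. (The deterministic core of Theorem 2: the expected full sample risk is bounded by computable random-projection quantities whenever the projected inner products are uniformly ε-accurate.) -/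
/-!
Realise the losses as vectors `F n` of `L²(ν)`. Integrating against a probability measure
is the inner product with the constant `1`, a unit vector, so the risk is at most
`‖∑ pₙ Fₙ‖ ≤ ‖∑ w̃ₙ Fₙ‖ + ‖∑ (w̃ₙ - pₙ) Fₙ‖`. Expanding `‖∑ vₙ Fₙ‖²` through the Gram
matrix `⟪F m, F n⟫ = ∫ l_m l_n` and replacing it by `⟪u m, u n⟫` costs at most
`(∑ |vₙ|)² ε`.
-/

open MeasureTheory Finset
open scoped RealInnerProductSpace

section GramMatrix

variable {ι E F : Type*} [Fintype ι]
  [NormedAddCommGroup E] [InnerProductSpace ℝ E] [NormedAddCommGroup F] [InnerProductSpace ℝ F]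

lemma norm_sum_smul_sq_eq_sum_inner (v : ι → ℝ) (f : ι → E) :
    ‖∑ i, v i • f i‖ ^ 2 = ∑ i, ∑ j, v i * v j * ⟪f i, f j⟫ := by
  rw [← real_inner_self_eq_norm_sq, sum_inner]
  simp only [inner_sum, real_inner_smul_left, real_inner_smul_right, mul_assoc, mul_left_comm]

lemma norm_sum_smul_le_sqrt_of_abs_inner_sub_le {f : ι → E} {g : ι → F} {ε : ℝ}
    (h : ∀ i j, |⟪f i, f j⟫ - ⟪g i, g j⟫| ≤ ε) (v : ι → ℝ) :
    ‖∑ i, v i • f i‖ ≤ √(‖∑ i, v i • g i‖ ^ 2 + (∑ i, |v i|) ^ 2 * ε) := by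
  refine Real.le_sqrt_of_sq_le ?_
  calc ‖∑ i, v i • f i‖ ^ 2
      = ‖∑ i, v i • g i‖ ^ 2 + ∑ i, ∑ j, v i * v j * (⟪f i, f j⟫ - ⟪g i, g j⟫) := by
        simp only [norm_sum_smul_sq_eq_sum_inner, ← sum_add_distrib, mul_sub, add_sub_cancel]
    _ ≤ ‖∑ i, v i • g i‖ ^ 2 + ∑ i, ∑ j, |v i| * |v j| * ε := by
        refine add_le_add le_rfl (sum_le_sum fun i _ => sum_le_sum fun j _ => ?_)
        calc v i * v j * (⟪f i, f j⟫ - ⟪g i, g j⟫)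
            ≤ |v i * v j * (⟪f i, f j⟫ - ⟪g i, g j⟫)| := le_abs_self _
          _ = |v i| * |v j| * |⟪f i, f j⟫ - ⟪g i, g j⟫| := by rw [abs_mul, abs_mul]
          _ ≤ |v i| * |v j| * ε := by gcongr; exact h i j
    _ = ‖∑ i, v i • g i‖ ^ 2 + (∑ i, |v i|) ^ 2 * ε := by
        rw [sq (∑ i, |v i|), sum_mul_sum, sum_mul]
        simp_rw [sum_mul]

end GramMatrix

section L2

variable {α ι : Type*} [MeasurableSpace α] {μ : Measure α}

lemma MemLp.inner_toLp_toLp {f g : α → ℝ} (hf : MemLp f 2 μ) (hg : MemLp g 2 μ) :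
    ⟪hf.toLp f, hg.toLp g⟫ = ∫ x, f x * g x ∂μ := by
  rw [L2.inner_def]
  refine integral_congr_ae ?_
  filter_upwards [hf.coeFn_toLp, hg.coeFn_toLp] with x hfx hgx
  simp [hfx, hgx, mul_comm]

lemma abs_integral_sum_mul_le_norm_sum_smul_toLp [IsProbabilityMeasure μ] [Fintype ι]
    {f : ι → α → ℝ} (hf : ∀ i, MemLp (f i) 2 μ) (c : ι → ℝ) :
    |∫ x, ∑ i, c i * f i x ∂μ| ≤ ‖∑ i, c i • (hf i).toLp (f i)‖ := by
  have h_one : ‖Lp.const 2 μ (1 : ℝ)‖ = 1 := by simp [Lp.norm_const]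
  have h_integral :
      ∫ x, ∑ i, c i * f i x ∂μ = ⟪Lp.const 2 μ 1, ∑ i, c i • (hf i).toLp (f i)⟫ := by
    rw [integral_finsetSum _ fun i _ => ((hf i).integrable one_le_two).const_mul (c i),
      inner_sum]
    refine sum_congr rfl fun i _ => ?_
    rw [integral_const_mul, real_inner_smul_right, ← indicatorConstLp_univ, L2.inner_indicatorConstLp_one,
      setIntegral_univ, integral_congr_ae (hf i).coeFn_toLp]
  rw [h_integral]
  simpa [h_one] using abs_real_inner_le_norm (Lp.const 2 μ (1 : ℝ)) (∑ i, c i • (hf i).toLp (f i))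

end L2

theorem expected_risk_le_random_projection_bound_general
    {Θ : Type*} [MeasurableSpace Θ] (ν : Measure Θ) [IsProbabilityMeasure ν]
    (N J : ℕ) (l : Fin N → Θ → ℝ) (hl : ∀ n, MemLp (l n) 2 ν)
    (p : Fin N → ℝ)
    (w : Fin N → ℝ)
    (u : Fin N → EuclideanSpace ℝ (Fin J))
    (ε : ℝ)
    (hu : ∀ m n, |(∫ θ, l m θ * l n θ ∂ν) - ⟪u m, u n⟫| ≤ ε) :
    |∫ θ, (∑ n, p n * l n θ) ∂ν| ≤
      Real.sqrt (‖∑ n, w n • u n‖ ^ 2 + (∑ n, |w n|) ^ 2 * ε) +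
      Real.sqrt (‖∑ n, (w n - p n) • u n‖ ^ 2 + (∑ n, |w n - p n|) ^ 2 * ε) := by
  set F : Fin N → Lp ℝ 2 ν := fun n => (hl n).toLp (l n)
  have hF : ∀ m n, |⟪F m, F n⟫ - ⟪u m, u n⟫| ≤ ε := fun m n => by
    rw [MemLp.inner_toLp_toLp]; exact hu m n
  have h_split : ∑ n, p n • F n = ∑ n, w n • F n - ∑ n, (w n - p n) • F n := by
    simp [sub_smul]
  calc |∫ θ, (∑ n, p n * l n θ) ∂ν|
      ≤ ‖∑ n, p n • F n‖ := abs_integral_sum_mul_le_norm_sum_smul_toLp hl p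
    _ ≤ ‖∑ n, w n • F n‖ + ‖∑ n, (w n - p n) • F n‖ := h_split ▸ norm_sub_le _ _
    _ ≤ _ := add_le_add (norm_sum_smul_le_sqrt_of_abs_inner_sub_le hF w)
        (norm_sum_smul_le_sqrt_of_abs_inner_sub_le hF _)

/-- The deterministic core of Theorem 2: whenever the projected inner products are
uniformly `ε`-accurate, the expected full sample risk is bounded by computable
random-projection quantities. -/
theorem expected_risk_le_random_projection_bound
    {Θ : Type*} [MeasurableSpace Θ] (ν : Measure Θ) [IsProbabilityMeasure ν]
    (N J : ℕ) (l : Fin N → Θ → ℝ) (hl : ∀ n, MemLp (l n) 2 ν)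
    (p : Fin N → ℝ) (hp0 : ∀ n, 0 ≤ p n) (hp1 : ∑ n, p n = 1)
    (w : Fin N → ℝ)
    (u : Fin N → EuclideanSpace ℝ (Fin J))
    (ε : ℝ) (hε : 0 ≤ ε)
    (hu : ∀ m n, |(∫ θ, l m θ * l n θ ∂ν) - ⟪u m, u n⟫| ≤ ε) :
    |∫ θ, (∑ n, p n * l n θ) ∂ν| ≤
      Real.sqrt (‖∑ n, w n • u n‖ ^ 2 + (∑ n, |w n|) ^ 2 * ε) +
      Real.sqrt (‖∑ n, (w n - p n) • u n‖ ^ 2 + (∑ n, |w n - p n|) ^ 2 * ε) :=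
  expected_risk_le_random_projection_bound_general ν N J l hl p w u ε hu
end
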